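/- arXiv:1303.7099 — 3 statements merged into one kernel-verified Lean document; each statement's English description precedes it below -/
import Mathlib

section
/- Let γ ∈ SL(d+1, ℝ) preserve a sharp (properly) convex open cone C ⊂ ℝ^{d+1}. Then the spectral radius ρ of γ is an eigenvalue of γ (i.e., γ is positively semi-proximal). -/
/-
The closure `K` of `C` is a closed salient cone, so some linear form `f` dominates a multiple of
the norm on `K`. Since `C` has an interior point `u`, every operator `M` preserving `K` satisfies
`‖M‖ ≲ f (M u)`; applied to `M = γⁿ`, together with `ρⁿ ≤ ‖γⁿ‖`, this gives `f (γⁿ u) ≳ ρⁿ`.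
For `t > ρ`, Gelfand's formula makes the Neumann series `r_t = ∑ t⁻⁽ⁿ⁺¹⁾ γⁿ u` converge; it solves
`(t - γ) r_t = u` and `f r_t ≳ 1 / (t - ρ)`. Hence `‖(γ - ρ) r_t‖ = o(‖r_t‖)` as `t → ρ⁺`, and in
finite dimension an approximate eigenvalue is an eigenvalue.
-/

open Filter Topology Set Metric Matrix

section ConeClosure

variable {E : Type*} [NormedAddCommGroup E] [NormedSpace ℝ E] {C : Set E}

theorem smul_mem_closure_of_smul_mem (hC : ∀ t : ℝ, 0 < t → ∀ x ∈ C, t • x ∈ C) :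
    ∀ t : ℝ, 0 < t → ∀ x ∈ closure C, t • x ∈ closure C := fun t ht _ hx =>
  MapsTo.closure (f := fun x : E => t • x) (fun x hx => hC t ht x hx) (continuous_const_smul t) hx

theorem zero_mem_closure_of_smul_mem (hne : C.Nonempty)
    (hC : ∀ t : ℝ, 0 < t → ∀ x ∈ C, t • x ∈ C) : (0 : E) ∈ closure C := by
  obtain ⟨u, hu⟩ := hne
  have : Tendsto (fun t : ℝ => t • u) (𝓝[>] 0) (𝓝 0) := by
    simpa using ((tendsto_id (x := 𝓝 (0 : ℝ))).mono_left nhdsWithin_le_nhds).smul_const u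
  exact mem_closure_of_tendsto this (eventually_mem_nhdsWithin.mono fun t ht => hC t ht u hu)

end ConeClosure

section SalientCone

variable {E : Type*} [NormedAddCommGroup E] [NormedSpace ℝ E] {K : Set E}

theorem exists_nonneg_on_pos_at_of_salient (hKc : IsClosed K) (hKconv : Convex ℝ K)
    (hKsmul : ∀ t : ℝ, 0 < t → ∀ x ∈ K, t • x ∈ K) (h0 : (0 : E) ∈ K)
    (hsal : ∀ x ∈ K, x ≠ 0 → -x ∉ K) {x : E} (hx : x ∈ K) (hx0 : x ≠ 0) :
    ∃ f : E →L[ℝ] ℝ, (∀ y ∈ K, 0 ≤ f y) ∧ 0 < f x := by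
  obtain ⟨f, a, hfx, hfK⟩ := geometric_hahn_banach_point_closed hKconv hKc (hsal x hx hx0)
  have ha : a < 0 := by simpa using hfK 0 h0
  refine ⟨f, fun y hy => ?_, by linarith [map_neg f x]⟩
  by_contra! hy'
  have := hfK _ (hKsmul (a / f y) (div_pos_of_neg_of_neg ha hy') y hy)
  rw [map_smul, smul_eq_mul, div_mul_cancel₀ _ hy'.ne] at this
  exact lt_irrefl _ this

theorem exists_nonneg_on_pos_on_compact_of_salient (hKc : IsClosed K) (hKconv : Convex ℝ K)
    (hKsmul : ∀ t : ℝ, 0 < t → ∀ x ∈ K, t • x ∈ K) (h0 : (0 : E) ∈ K)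
    (hsal : ∀ x ∈ K, x ≠ 0 → -x ∉ K) {S : Set E} (hS : IsCompact S) (hSK : S ⊆ K)
    (hS0 : (0 : E) ∉ S) :
    ∃ f : E →L[ℝ] ℝ, (∀ y ∈ K, 0 ≤ f y) ∧ ∀ y ∈ S, 0 < f y := by
  choose! F hFK hFpos using fun x (hx : x ∈ S) =>
    exists_nonneg_on_pos_at_of_salient hKc hKconv hKsmul h0 hsal (hSK hx)
      (ne_of_mem_of_not_mem hx hS0)
  obtain ⟨t, htS, ht⟩ := hS.elim_nhds_subcover (fun x => {y | 0 < F x y})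
    fun x hx => (isOpen_lt continuous_const (F x).continuous).mem_nhds (hFpos x hx)
  refine ⟨∑ x ∈ t, F x, fun y hy => ?_, fun y hy => ?_⟩
  · simpa using Finset.sum_nonneg fun x hx => hFK x (htS x hx) y hy
  · obtain ⟨x, hxt, hxy⟩ := mem_iUnion₂.mp (ht hy)
    simpa using Finset.sum_pos' (fun x' hx' => hFK x' (htS x' hx') y (hSK hy)) ⟨x, hxt, hxy⟩

theorem exists_mul_norm_le_of_salient [FiniteDimensional ℝ E] (hKc : IsClosed K)
    (hKconv : Convex ℝ K) (hKsmul : ∀ t : ℝ, 0 < t → ∀ x ∈ K, t • x ∈ K) (h0 : (0 : E) ∈ K)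
    (hsal : ∀ x ∈ K, x ≠ 0 → -x ∉ K) :
    ∃ f : E →L[ℝ] ℝ, ∃ c > 0, ∀ x ∈ K, c * ‖x‖ ≤ f x := by
  have hS : IsCompact (K ∩ sphere 0 1) := (isCompact_sphere 0 1).inter_left hKc
  obtain ⟨f, -, hfS⟩ := exists_nonneg_on_pos_on_compact_of_salient hKc hKconv hKsmul h0 hsal hS
    inter_subset_left (by simp)
  obtain ⟨c, hc, hcS⟩ := hS.exists_forall_le' f.continuous.continuousOn hfS
  refine ⟨f, c, hc, fun x hx => ?_⟩
  rcases eq_or_ne x 0 with rfl | hx0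
  · simp
  have hnx : 0 < ‖x‖ := norm_pos_iff.mpr hx0
  have := hcS (‖x‖⁻¹ • x) ⟨hKsmul _ (inv_pos.mpr hnx) x hx, by simp [norm_smul, hnx.ne']⟩
  rw [map_smul, smul_eq_mul, le_inv_mul_iff₀ hnx, mul_comm] at this
  exact this

theorem mul_norm_le_of_add_mem_of_sub_mem {f : E →L[ℝ] ℝ} {c : ℝ} (hc : 0 ≤ c)
    (hf : ∀ x ∈ K, c * ‖x‖ ≤ f x) {u v : E} (h₁ : u + v ∈ K) (h₂ : u - v ∈ K) :
    c * ‖v‖ ≤ f u := by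
  have hv : ‖(2 : ℝ) • v‖ ≤ ‖u + v‖ + ‖u - v‖ := by
    rw [show (2 : ℝ) • v = (u + v) - (u - v) by module]
    exact norm_sub_le _ _
  have hfu : f (u + v) + f (u - v) = 2 * f u := by simp only [map_add, map_sub]; ring
  rw [norm_smul, Real.norm_two] at hv
  nlinarith [hf _ h₁, hf _ h₂]

theorem mul_mul_opNorm_le_of_mapsTo {f : E →L[ℝ] ℝ} {c : ℝ} (hc : 0 < c)
    (hf : ∀ x ∈ K, c * ‖x‖ ≤ f x) {M : E →L[ℝ] E} (hM : MapsTo M K K) {u : E} {δ : ℝ}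
    (hδ : 0 < δ) (hball : closedBall u δ ⊆ K) : c * δ * ‖M‖ ≤ f (M u) := by
  have hMu : 0 ≤ f (M u) :=
    (mul_nonneg hc.le (norm_nonneg _)).trans (hf _ (hM (hball (mem_closedBall_self hδ.le))))
  rw [← le_div_iff₀' (by positivity)]
  refine M.opNorm_le_bound (by positivity) fun x => ?_
  rcases eq_or_ne x 0 with rfl | hx0
  · simp
  have hnx : 0 < ‖x‖ := norm_pos_iff.mpr hx0
  set v := (δ / ‖x‖) • x
  have hv : ‖v‖ = δ := by simp [v, norm_smul, abs_of_pos hδ, hnx.ne']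
  have h₁ : M u + M v ∈ K := map_add M u v ▸ hM (hball (by simp [hv]))
  have h₂ : M u - M v ∈ K := map_sub M u v ▸ hM (hball (by simp [hv]))
  have key := mul_norm_le_of_add_mem_of_sub_mem hc.le hf h₁ h₂
  rw [map_smul, norm_smul, Real.norm_eq_abs, abs_of_pos (by positivity)] at key
  rw [div_mul_eq_mul_div, le_div_iff₀ (by positivity)]
  calc ‖M x‖ * (c * δ) = c * (δ / ‖x‖ * ‖M x‖) * ‖x‖ := by field_simp
    _ ≤ f (M u) * ‖x‖ := by gcongr

end SalientCone

theorem div_sub_le_of_hasSum_inv_pow_mul {a : ℕ → ℝ} {m ρ t S : ℝ} (hρ : 0 ≤ ρ) (hρt : ρ < t)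
    (ha : ∀ n, m * ρ ^ n ≤ a n) (hS : HasSum (fun n => (t ^ (n + 1))⁻¹ * a n) S) :
    m / (t - ρ) ≤ S := by
  have ht : 0 < t := hρ.trans_lt hρt
  have hgeom : HasSum (fun n => (t ^ (n + 1))⁻¹ * (m * ρ ^ n)) (m / (t - ρ)) := by
    have h := (hasSum_geometric_of_lt_one (div_nonneg hρ ht.le)
      ((div_lt_one ht).mpr hρt)).mul_left (m / t)
    have hterm : (fun n => m / t * (ρ / t) ^ n) = fun n => (t ^ (n + 1))⁻¹ * (m * ρ ^ n) := by
      ext n; rw [div_pow, pow_succ]; field_simp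
    have hsum : m / t * (1 - ρ / t)⁻¹ = m / (t - ρ) := by
      rw [one_sub_div ht.ne', inv_div, div_mul_div_cancel₀ ht.ne']
    rwa [hterm, hsum] at h
  exact hasSum_le (fun n => by gcongr; exact ha n) hgeom hS

theorem Module.End.hasEigenvalue_of_forall_exists_norm_sub_smul_le {𝕜 E : Type*}
    [NontriviallyNormedField 𝕜] [CompleteSpace 𝕜] [NormedAddCommGroup E] [NormedSpace 𝕜 E]
    [FiniteDimensional 𝕜 E] (T : Module.End 𝕜 E) (μ : 𝕜)
    (h : ∀ ε > 0, ∃ v ≠ 0, ‖T v - μ • v‖ ≤ ε * ‖v‖) : T.HasEigenvalue μ := by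
  by_contra hμ
  have hker : LinearMap.ker (T - algebraMap 𝕜 _ μ) = ⊥ := by
    rwa [Module.End.hasEigenvalue_iff, Module.End.eigenspace_def, not_not] at hμ
  obtain ⟨K, hK, hanti⟩ := (T - algebraMap 𝕜 _ μ).exists_antilipschitzWith hker
  obtain ⟨v, hv0, hv⟩ := h (2 * (K : ℝ))⁻¹ (by positivity)
  have hbound := ZeroHomClass.bound_of_antilipschitz _ hanti v
  simp only [LinearMap.sub_apply, Module.algebraMap_end_apply] at hbound
  have hnv : 0 < ‖v‖ := norm_pos_iff.mpr hv0
  have : ‖v‖ ≤ ‖v‖ / 2 :=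
    calc ‖v‖ ≤ K * ((2 * (K : ℝ))⁻¹ * ‖v‖) := hbound.trans (by gcongr)
      _ = ‖v‖ / 2 := by field_simp
  linarith

section Resolvent

variable {E : Type*} [NormedAddCommGroup E] [NormedSpace ℝ E]

theorem exists_hasSum_resolvent [CompleteSpace E] (T : E →L[ℝ] E) {s t : ℝ} (hs : 0 ≤ s)
    (hst : s < t) (hT : ∀ᶠ n in atTop, ‖T ^ n‖ ≤ s ^ n) (u : E) :
    ∃ r, HasSum (fun n => (t ^ (n + 1))⁻¹ • (T ^ n) u) r ∧ T r = t • r - u := by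
  have ht : 0 < t := hs.trans_lt hst
  have hsum : Summable fun n => (t ^ (n + 1))⁻¹ • (T ^ n) u := by
    refine .of_norm_bounded_eventually_nat
      ((summable_geometric_of_lt_one (div_nonneg hs ht.le) ((div_lt_one ht).mpr hst)).mul_left
        (‖u‖ / t)) ?_
    filter_upwards [hT] with n hn
    rw [norm_smul, norm_inv, norm_pow, Real.norm_of_nonneg ht.le, div_pow, pow_succ]
    calc (t ^ n * t)⁻¹ * ‖(T ^ n) u‖ ≤ (t ^ n * t)⁻¹ * (s ^ n * ‖u‖) := by
          gcongr; exact (T ^ n).le_of_opNorm_le hn u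
      _ = ‖u‖ / t * (s ^ n / t ^ n) := by field_simp
  obtain ⟨r, hr⟩ := hsum
  refine ⟨r, hr, ?_⟩
  have hshift := (hasSum_nat_add_iff' 1).mpr hr
  have hTr := hr.mapL T
  have : (fun n => T ((t ^ (n + 1))⁻¹ • (T ^ n) u))
      = fun n => t • ((t ^ (n + 1 + 1))⁻¹ • (T ^ (n + 1)) u) := by
    ext n
    rw [map_smul, smul_smul, pow_succ' T n, mul_apply_eq_comp, pow_succ _ (n + 1)]
    field_simp
  rw [this] at hTr
  rw [hTr.unique (hshift.const_smul t)]
  simp [smul_sub, ht.ne']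

theorem exists_resolvent_apply_ge [CompleteSpace E] (T : E →L[ℝ] E) (f : E →L[ℝ] ℝ) (u : E)
    {m ρ : ℝ} (hρ : 0 ≤ ρ) (hT : ∀ s > ρ, ∀ᶠ n in atTop, ‖T ^ n‖ ≤ s ^ n)
    (hlow : ∀ n, m * ρ ^ n ≤ f ((T ^ n) u)) :
    ∀ t > ρ, ∃ r, T r = t • r - u ∧ m / (t - ρ) ≤ f r := by
  intro t ht
  obtain ⟨r, hr, hTr⟩ := exists_hasSum_resolvent T (s := (ρ + t) / 2) (t := t) (by linarith)
    (by linarith) (hT _ (by linarith)) u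
  refine ⟨r, hTr, div_sub_le_of_hasSum_inv_pow_mul hρ ht hlow ?_⟩
  simpa only [map_smul, smul_eq_mul] using hr.mapL f

theorem hasEigenvalue_of_resolvent_apply_ge [FiniteDimensional ℝ E] (T : E →L[ℝ] E)
    (f : E →L[ℝ] ℝ) (u : E) {m ρ : ℝ} (hm : 0 < m)
    (h : ∀ t > ρ, ∃ r, T r = t • r - u ∧ m / (t - ρ) ≤ f r) :
    Module.End.HasEigenvalue (T : E →ₗ[ℝ] E) ρ := by
  refine Module.End.hasEigenvalue_of_forall_exists_norm_sub_smul_le _ _ fun ε hε => ?_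
  set κ := 1 + ‖f‖ * ‖u‖ / m
  have hκ : 0 < κ := by positivity
  set η := ε / κ
  have hη : 0 < η := by positivity
  obtain ⟨r, hTr, hfr⟩ := h (ρ + η) (by linarith)
  rw [add_sub_cancel_left, div_le_iff₀' hη] at hfr
  have hfr' : m ≤ η * (‖f‖ * ‖r‖) :=
    hfr.trans (by gcongr; exact (le_abs_self _).trans (f.le_opNorm r))
  have hr : 0 < ‖r‖ :=
    pos_of_mul_pos_right (pos_of_mul_pos_right (hm.trans_le hfr') hη.le) (norm_nonneg f)
  refine ⟨r, norm_pos_iff.mp hr, ?_⟩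
  -- `f r ≥ m / η` forces `‖r‖ ≳ 1 / η`, so the defect `u` is of order `η ‖r‖`.
  have hu : ‖u‖ ≤ η * (‖f‖ * ‖u‖ / m) * ‖r‖ := by
    rw [mul_div_assoc', div_mul_eq_mul_div, le_div_iff₀ hm]
    calc ‖u‖ * m ≤ ‖u‖ * (η * (‖f‖ * ‖r‖)) := by gcongr
      _ = η * (‖f‖ * ‖u‖) * ‖r‖ := by ring
  calc ‖(T : E →ₗ[ℝ] E) r - ρ • r‖ = ‖η • r - u‖ := by
        congr 1; simp only [ContinuousLinearMap.coe_coe, hTr]; module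
    _ ≤ η * ‖r‖ + η * (‖f‖ * ‖u‖ / m) * ‖r‖ := by
        grw [norm_sub_le, norm_smul, Real.norm_of_nonneg hη.le, hu]
    _ = ε * ‖r‖ := by
        simp only [η, κ]; field_simp

end Resolvent

section MatrixNorm

attribute [local instance] Matrix.linftyOpNormedRing Matrix.linftyOpNormedAlgebra

variable {n : Type*} [Fintype n] [DecidableEq n]

theorem Matrix.norm_pow_le_norm_pow_of_hasEigenvalue {𝕜 : Type*} [NontriviallyNormedField 𝕜]
    {B : Matrix n n 𝕜} {μ : 𝕜} (hμ : Module.End.HasEigenvalue (Matrix.toLin' B) μ) (k : ℕ) :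
    ‖μ‖ ^ k ≤ ‖B ^ k‖ := by
  obtain ⟨z, hz⟩ := hμ.exists_hasEigenvector
  have hBz : (B ^ k) *ᵥ z = μ ^ k • z := by
    rw [← Matrix.toLin'_apply, Matrix.toLin'_pow, hz.pow_apply]
  have hnz : 0 < ‖z‖ := norm_pos_iff.mpr hz.2
  have := Matrix.linfty_opNorm_mulVec (B ^ k) z
  rw [hBz, norm_smul, norm_pow] at this
  exact le_of_mul_le_mul_right this hnz

theorem Matrix.eventually_norm_pow_le {B : Matrix n n ℂ} {ρ s : ℝ} (hρ : 0 ≤ ρ)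
    (hB : ∀ μ, Module.End.HasEigenvalue (Matrix.toLin' B) μ → ‖μ‖ ≤ ρ) (hs : ρ < s) :
    ∀ᶠ k in atTop, ‖B ^ k‖ ≤ s ^ k := by
  have hs0 : 0 < s := hρ.trans_lt hs
  have hrad : spectralRadius ℂ B < ENNReal.ofReal s := by
    refine lt_of_le_of_lt (iSup₂_le fun μ hμ => ?_) ((ENNReal.ofReal_lt_ofReal_iff hs0).mpr hs)
    rw [← Matrix.spectrum_toLin', ← Module.End.hasEigenvalue_iff_mem_spectrum] at hμ
    rw [← enorm_eq_nnnorm, ← ofReal_norm]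
    exact ENNReal.ofReal_le_ofReal (hB μ hμ)
  filter_upwards [(spectrum.pow_norm_pow_one_div_tendsto_nhds_spectralRadius B).eventually_lt_const
    hrad, eventually_ne_atTop 0] with k hk hk0
  rw [ENNReal.ofReal_lt_ofReal_iff hs0, one_div] at hk
  calc ‖B ^ k‖ = (‖B ^ k‖ ^ (k⁻¹ : ℝ)) ^ k :=
        (Real.rpow_inv_natCast_pow (norm_nonneg _) hk0).symm
    _ ≤ s ^ k := by gcongr

theorem Matrix.norm_toContinuousLinearMap_toLin'_pow (A : Matrix n n ℝ) (k : ℕ) :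
    ‖(LinearMap.toContinuousLinearMap (Matrix.toLin' A)) ^ k‖ =
      ‖(A.map (algebraMap ℝ ℂ)) ^ k‖ := by
  rw [← Matrix.linfty_opNorm_toMatrix, ContinuousLinearMap.toLinearMap_pow,
    LinearMap.coe_toContinuousLinearMap, ← Matrix.toLin'_pow, LinearMap.toMatrix'_toLin',
    ← Matrix.map_pow]
  simp [Matrix.linfty_opNorm_def]

end MatrixNorm

/-- If `γ ∈ SL(d+1, ℝ)` preserves a nonempty sharp open convex cone `C ⊆ ℝ^{d+1}`, then the
spectral radius `ρ` of `γ` (the maximum of the moduli of its complex eigenvalues) is itself a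
(real) eigenvalue of `γ`: `γ` is positively semi-proximal. -/
theorem preserves_sharp_cone_positively_semiproximal {d : ℕ}
    (γ : Matrix.SpecialLinearGroup (Fin (d + 1)) ℝ)
    (C : Set (Fin (d + 1) → ℝ)) (hne : C.Nonempty)
    (ho : IsOpen C) (hconv : Convex ℝ C)
    (hcone : ∀ t : ℝ, 0 < t → ∀ x ∈ C, t • x ∈ C)
    (hsharp : ∀ x : Fin (d + 1) → ℝ, x ≠ 0 → x ∈ closure C → -x ∉ closure C)
    (hpres : Matrix.toLin' (γ : Matrix (Fin (d + 1)) (Fin (d + 1)) ℝ) '' C = C)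
    (ρ : ℝ)
    (hmax : ∀ μ : ℂ, Module.End.HasEigenvalue
      (Matrix.toLin' ((γ : Matrix (Fin (d + 1)) (Fin (d + 1)) ℝ).map (algebraMap ℝ ℂ))) μ →
      ‖μ‖ ≤ ρ)
    (hattain : ∃ μ : ℂ, Module.End.HasEigenvalue
      (Matrix.toLin' ((γ : Matrix (Fin (d + 1)) (Fin (d + 1)) ℝ).map (algebraMap ℝ ℂ))) μ ∧
      ‖μ‖ = ρ) :
    Module.End.HasEigenvalue
      (Matrix.toLin' (γ : Matrix (Fin (d + 1)) (Fin (d + 1)) ℝ)) ρ := by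
  set A : Matrix (Fin (d + 1)) (Fin (d + 1)) ℝ := (γ : Matrix (Fin (d + 1)) (Fin (d + 1)) ℝ)
  set T := LinearMap.toContinuousLinearMap (Matrix.toLin' A)
  obtain ⟨μ, hμ, rfl⟩ := hattain
  obtain ⟨u, hu⟩ := hne
  obtain ⟨ε, hε, hball⟩ := nhds_basis_closedBall.mem_iff.mp (ho.mem_nhds hu)
  obtain ⟨f, c, hc, hf⟩ := exists_mul_norm_le_of_salient isClosed_closure hconv.closure
    (smul_mem_closure_of_smul_mem hcone) (zero_mem_closure_of_smul_mem ⟨u, hu⟩ hcone)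
    fun x hx hx0 => hsharp x hx0 hx
  have hT : MapsTo T (closure C) (closure C) :=
    MapsTo.closure (fun x hx => hpres ▸ mem_image_of_mem _ hx) T.continuous
  have hlow : ∀ n, c * ε * ‖μ‖ ^ n ≤ f ((T ^ n) u) := fun n => calc
    c * ε * ‖μ‖ ^ n ≤ c * ε * ‖T ^ n‖ := by
      rw [Matrix.norm_toContinuousLinearMap_toLin'_pow]
      gcongr
      exact Matrix.norm_pow_le_norm_pow_of_hasEigenvalue hμ n
    _ ≤ f ((T ^ n) u) := mul_mul_opNorm_le_of_mapsTo hc hf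
      (by simpa [FunLike.coe_pow_eq_iterate] using hT.iterate n) hε (hball.trans subset_closure)
  have hup : ∀ s > ‖μ‖, ∀ᶠ n in atTop, ‖T ^ n‖ ≤ s ^ n := fun s hs => by
    simpa only [T, Matrix.norm_toContinuousLinearMap_toLin'_pow] using
      Matrix.eventually_norm_pow_le (norm_nonneg μ) hmax hs
  exact hasEigenvalue_of_resolvent_apply_ge T f u (by positivity)
    (exists_resolvent_apply_ge T f u (norm_nonneg μ) hup hlow)
end

section
/- If γ ∈ SL(d+1, ℝ) preserves a properly convex open subset Ω of ℝP^d and all eigenvalues of γ have modulus 1 and γ is diagonalizable over ℂ (i.e., γ is S¹-semi-simple), then γ fixes a point of Ω. -/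
/-!
Diagonalizability over `ℂ` with unimodular eigenvalues bounds `γⁿ x` for every vector `x`
and all `n : ℤ`, and by Banach–Steinhaus the powers `γⁿ` are then uniformly bounded. The cone
`C` over `Ω` is connected and disjoint from `-C`, so `γ` or `-γ` maps `C` into itself; call it
`T`. A limit point of the Cesàro averages of a `T`-orbit in `C` is fixed by `T`. It lies in the
open set `C` because the bounded inverse powers give every orbit point, hence by convexity every
average, a neighbourhood of uniform size inside `C`.
-/

/-- A sharp open convex cone in a real topological vector space: open, convex, stable under
positive scalar multiplication, and whose closure contains no line through the origin. -/
def IsSharpCone {V : Type*} [AddCommGroup V] [Module ℝ V] [TopologicalSpace V]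
    (C : Set V) : Prop :=
  IsOpen C ∧ Convex ℝ C ∧ (∀ t : ℝ, 0 < t → ∀ x ∈ C, t • x ∈ C) ∧
    ∀ x : V, x ≠ 0 → x ∈ closure C → -x ∉ closure C

/-- The projectivization of a cone `C`: the set of projective points represented by a nonzero
vector of `C`. -/
def projCone {V : Type*} [AddCommGroup V] [Module ℝ V] (C : Set V) :
    Set (Projectivization ℝ V) :=
  {p | ∃ v, ∃ hv : v ≠ 0, v ∈ C ∧ Projectivization.mk ℝ v hv = p}

/-- A properly convex open subset of the real projective space `P(V)`: the projectivization of
a nonempty sharp open convex cone of `V`. -/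
def IsProperlyConvexOpen {V : Type*} [AddCommGroup V] [Module ℝ V] [TopologicalSpace V]
    (Ω : Set (Projectivization ℝ V)) : Prop :=
  ∃ C : Set V, IsSharpCone C ∧ C.Nonempty ∧ Ω = projCone C

open Set Filter Topology Module

namespace Module.End

theorem coe_units_zpow_natCast {R M : Type*} [Semiring R] [AddCommMonoid M]
    [Module R M] (u : (End R M)ˣ) (k : ℕ) :
    ⇑((u ^ (k : ℤ) : (End R M)ˣ) : End R M) = (⇑(u : End R M))^[k] := by
  rw [zpow_natCast, Units.val_pow_eq_pow_val, coe_pow]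

variable {K V : Type*} [Field K] [AddCommGroup V] [Module K V]

theorem pow_apply_of_mem_eigenspace {f : End K V} {μ : K} {x : V} (hx : x ∈ eigenspace f μ)
    (k : ℕ) : (f ^ k) x = μ ^ k • x := by
  induction k with
  | zero => simp
  | succ k ih =>
    rw [pow_succ', mul_apply, ih, map_smul, mem_eigenspace_iff.mp hx, smul_smul, pow_succ]

theorem inv_mem_eigenspace_inv (u : (End K V)ˣ) {μ : K} {x : V}
    (hx : x ∈ eigenspace (u : End K V) μ) : x ∈ eigenspace (↑u⁻¹ : End K V) μ⁻¹ := by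
  rw [mem_eigenspace_iff] at hx ⊢
  have hcancel (y : V) : (↑u⁻¹ : End K V) ((u : End K V) y) = y := by
    rw [← mul_apply, Units.inv_mul, one_apply]
  rcases eq_or_ne μ 0 with rfl | hμ
  · have := hcancel x
    rw [hx, zero_smul, map_zero] at this
    simp [← this]
  · simpa [hx, smul_smul, hμ] using hcancel (μ⁻¹ • x)

theorem zpow_apply_of_mem_eigenspace (u : (End K V)ˣ) {μ : K} {x : V}
    (hx : x ∈ eigenspace (u : End K V) μ) (n : ℤ) :
    ((u ^ n : (End K V)ˣ) : End K V) x = μ ^ n • x := by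
  obtain ⟨k, rfl | rfl⟩ := n.eq_nat_or_neg
  · simpa using pow_apply_of_mem_eigenspace hx k
  · simpa [zpow_neg, ← inv_pow] using
      pow_apply_of_mem_eigenspace (inv_mem_eigenspace_inv u hx) k

theorem exists_bound_norm_zpow_apply_of_iSup_eigenspace_eq_top {𝕜 V : Type*} [NormedField 𝕜]
    [SeminormedAddCommGroup V] [NormedSpace 𝕜 V] (u : (End 𝕜 V)ˣ)
    (hspan : ⨆ μ : 𝕜, eigenspace (u : End 𝕜 V) μ = ⊤)
    (hunit : ∀ μ : 𝕜, HasEigenvalue (u : End 𝕜 V) μ → ‖μ‖ = 1) (x : V) :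
    ∃ B, ∀ n : ℤ, ‖((u ^ n : (End 𝕜 V)ˣ) : End 𝕜 V) x‖ ≤ B := by
  have hx : x ∈ ⨆ μ : 𝕜, eigenspace (u : End 𝕜 V) μ := hspan ▸ Submodule.mem_top
  induction hx using Submodule.iSup_induction' with
  | mem μ y hy =>
    refine ⟨‖y‖, fun n => ?_⟩
    rcases eq_or_ne y 0 with rfl | hy0
    · simp
    rw [zpow_apply_of_mem_eigenspace u hy, norm_smul, norm_zpow,
      hunit μ (hasEigenvalue_of_hasEigenvector ⟨hy, hy0⟩), one_zpow, one_mul]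
  | zero => exact ⟨0, by simp⟩
  | add y z _ _ hy hz =>
    obtain ⟨B, hB⟩ := hy
    obtain ⟨B', hB'⟩ := hz
    refine ⟨B + B', fun n => ?_⟩
    rw [map_add]
    exact (norm_add_le _ _).trans (add_le_add (hB n) (hB' n))

end Module.End

theorem LinearMap.exists_bound_of_forall_exists_bound {𝕜 E F ι : Type*}
    [NontriviallyNormedField 𝕜] [CompleteSpace 𝕜] [NormedAddCommGroup E] [NormedSpace 𝕜 E]
    [FiniteDimensional 𝕜 E] [SeminormedAddCommGroup F] [NormedSpace 𝕜 F] (f : ι → E →ₗ[𝕜] F)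
    (h : ∀ x, ∃ C, ∀ i, ‖f i x‖ ≤ C) : ∃ M, ∀ i x, ‖f i x‖ ≤ M * ‖x‖ := by
  have := FiniteDimensional.complete 𝕜 E
  obtain ⟨M, hM⟩ := banach_steinhaus (g := fun i => (f i).toContinuousLinearMap) h
  exact ⟨M, fun i x => ((f i).toContinuousLinearMap.le_opNorm x).trans (by gcongr; exact hM i)⟩

theorem Pi.norm_ofReal_comp {ι : Type*} [Fintype ι] (x : ι → ℝ) :
    ‖fun i => (x i : ℂ)‖ = ‖x‖ := by
  simp [Pi.norm_def]

namespace Matrix.GeneralLinearGroup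

variable {ι : Type*} [Fintype ι] [DecidableEq ι]

theorem toLin_map_apply_ofReal (A : GL ι ℝ) (x : ι → ℝ) :
    ((toLin (map (algebraMap ℝ ℂ) A) : End ℂ (ι → ℂ)) fun i => (x i : ℂ)) =
      fun i => ((toLin A : End ℝ (ι → ℝ)) x i : ℂ) := by
  funext i
  exact (RingHom.map_mulVec (algebraMap ℝ ℂ) (A : Matrix ι ι ℝ) x i).symm

theorem exists_bound_norm_toLin_zpow_apply (A : GL ι ℝ)
    (hspan : ⨆ μ : ℂ,
      End.eigenspace (Matrix.toLin' ((A : Matrix ι ι ℝ).map (algebraMap ℝ ℂ))) μ = ⊤)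
    (hunit : ∀ μ : ℂ,
      End.HasEigenvalue (Matrix.toLin' ((A : Matrix ι ι ℝ).map (algebraMap ℝ ℂ))) μ → ‖μ‖ = 1) :
    ∃ M, ∀ (n : ℤ) (x : ι → ℝ),
      ‖((toLin A ^ n : (End ℝ (ι → ℝ))ˣ) : End ℝ (ι → ℝ)) x‖ ≤ M * ‖x‖ := by
  refine LinearMap.exists_bound_of_forall_exists_bound _ fun x => ?_
  obtain ⟨B, hB⟩ := End.exists_bound_norm_zpow_apply_of_iSup_eigenspace_eq_top
    (toLin (map (algebraMap ℝ ℂ) A)) hspan hunit fun i => (x i : ℂ)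
  refine ⟨B, fun n => ?_⟩
  have := hB n
  rwa [← map_zpow, ← map_zpow, toLin_map_apply_ofReal, map_zpow, Pi.norm_ofReal_comp] at this

end Matrix.GeneralLinearGroup

theorem Convex.setOf_forall_add_mem {𝕜 E : Type*} [Field 𝕜] [LinearOrder 𝕜]
    [IsStrictOrderedRing 𝕜] [AddCommGroup E] [Module 𝕜 E] {C : Set E} (hC : Convex 𝕜 C)
    (p : E → Prop) : Convex 𝕜 {z | ∀ e, p e → z + e ∈ C} := by
  simp only [ofPred_forall]
  exact convex_iInter fun e => convex_iInter fun _ => hC.translate_preimage_left e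

theorem Convex.birkhoffAverage_mem {𝕜 E α : Type*} [Field 𝕜] [LinearOrder 𝕜]
    [IsStrictOrderedRing 𝕜] [AddCommGroup E] [Module 𝕜 E] {D : Set E} (hD : Convex 𝕜 D)
    {f : α → α} {g : α → E} {x : α} {n : ℕ} (hn : n ≠ 0) (h : ∀ k, g (f^[k] x) ∈ D) :
    birkhoffAverage 𝕜 f g n x ∈ D := by
  rw [birkhoffAverage, birkhoffSum, Finset.smul_sum]
  refine hD.sum_mem (fun _ _ => by positivity) ?_ fun k _ => h k
  simp [hn]

theorem apply_birkhoffAverage_id {𝕜 E : Type*} [DivisionSemiring 𝕜] [AddCommMonoid E]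
    [Module 𝕜 E] (T : E →ₗ[𝕜] E) (n : ℕ) (x : E) :
    T (birkhoffAverage 𝕜 (⇑T) id n x) = birkhoffAverage 𝕜 (⇑T) id n (T x) := by
  rw [map_birkhoffAverage 𝕜 𝕜 T]
  simp only [birkhoffAverage, birkhoffSum, Function.comp_apply, id,
    (Function.Commute.iterate_self T _).eq]

section FixedPoint

variable {E : Type*} [NormedAddCommGroup E] [NormedSpace ℝ E] {C : Set E} {u : (End ℝ E)ˣ}
  {M : ℝ}

-- `u⁻ᵏ` pulls `u^[k] v + e` back into the ball around `v`.
theorem iterate_add_mem_of_mapsTo (hmaps : MapsTo (u : End ℝ E) C C) {v : E} {r : ℝ}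
    (hball : Metric.ball v r ⊆ C)
    (hM : ∀ (n : ℤ) (x : E), ‖((u ^ n : (End ℝ E)ˣ) : End ℝ E) x‖ ≤ M * ‖x‖) (k : ℕ) {e : E}
    (he : M * ‖e‖ < r) : (⇑(u : End ℝ E))^[k] v + e ∈ C := by
  set w := ((u ^ (-(k : ℤ)) : (End ℝ E)ˣ) : End ℝ E) e
  have hw : (⇑(u : End ℝ E))^[k] (v + w) = (⇑(u : End ℝ E))^[k] v + e := by
    rw [← End.coe_units_zpow_natCast, map_add, ← End.mul_apply, ← Units.val_mul, ← zpow_add,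
      add_neg_cancel, zpow_zero, Units.val_one, End.one_apply]
  rw [← hw]
  refine hmaps.iterate k (hball ?_)
  rw [Metric.mem_ball, dist_self_add_left]
  exact (hM _ e).trans_lt he

theorem exists_mem_apply_eq_self_of_mapsTo [ProperSpace E] (hCo : IsOpen C) (hCc : Convex ℝ C)
    (hCne : C.Nonempty) (hmaps : MapsTo (u : End ℝ E) C C)
    (hM : ∀ (n : ℤ) (x : E), ‖((u ^ n : (End ℝ E)ˣ) : End ℝ E) x‖ ≤ M * ‖x‖) :
    ∃ x ∈ C, (u : End ℝ E) x = x := by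
  set T : End ℝ E := ↑u
  obtain ⟨v, hv⟩ := hCne
  obtain ⟨r, hr, hball⟩ := Metric.isOpen_iff.mp hCo v hv
  set A : ℕ → E := fun n => birkhoffAverage ℝ T id (n + 1) v
  have hAC (n : ℕ) : A n ∈ {z | ∀ e, M * ‖e‖ < r → z + e ∈ C} :=
    (hCc.setOf_forall_add_mem _).birkhoffAverage_mem n.succ_ne_zero
      fun k _ => iterate_add_mem_of_mapsTo hmaps hball hM k
  have horbit (k : ℕ) : id (T^[k] v) ∈ Metric.closedBall 0 (M * ‖v‖) := by
    rw [id, mem_closedBall_zero_iff, ← End.coe_units_zpow_natCast]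
    exact hM k v
  have hAbdd (n : ℕ) : A n ∈ Metric.closedBall 0 (M * ‖v‖) :=
    (convex_closedBall _ _).birkhoffAverage_mem n.succ_ne_zero horbit
  obtain ⟨x, -, φ, hφ, hlim⟩ := tendsto_subseq_of_bounded Metric.isBounded_closedBall hAbdd
  have hdrift : Tendsto (fun n => T (A n) - A n) atTop (𝓝 0) := by
    simp only [A, apply_birkhoffAverage_id]
    exact (tendsto_birkhoffAverage_apply_sub_birkhoffAverage ℝ
      (Metric.isBounded_closedBall.subset (range_subset_iff.2 horbit))).comp
      (tendsto_add_atTop_nat 1)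
  refine ⟨x, ?_, ?_⟩
  · have hclose : Tendsto (fun j => M * ‖x - A (φ j)‖) atTop (𝓝 0) := by
      simpa using ((tendsto_const_nhds (x := x)).sub hlim).norm.const_mul M
    obtain ⟨j, hj⟩ := (hclose.eventually (gt_mem_nhds hr)).exists
    simpa using hAC (φ j) _ hj
  · have hTcont : Continuous T := AddMonoidHomClass.continuous_of_bound T M (by simpa using hM 1)
    refine tendsto_nhds_unique ((hTcont.tendsto x).comp hlim) ?_
    simpa [Function.comp_def] using (hdrift.comp hφ.tendsto_atTop).add hlim

end FixedPoint

theorem mem_or_neg_mem_of_mk_mem_projCone {V : Type*} [AddCommGroup V] [Module ℝ V] {C : Set V}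
    (hpos : ∀ t : ℝ, 0 < t → ∀ x ∈ C, t • x ∈ C) {v : V} (hv : v ≠ 0)
    (h : Projectivization.mk ℝ v hv ∈ projCone C) : v ∈ C ∨ -v ∈ C := by
  obtain ⟨w, hw, hwC, hwv⟩ := h
  obtain ⟨a, rfl⟩ := (Projectivization.mk_eq_mk_iff ℝ v w hv hw).1 hwv.symm
  rw [Units.smul_def, ← neg_smul]
  rcases (a.ne_zero).lt_or_gt with ha | ha
  · exact .inr (hpos _ (neg_pos.2 ha) w hwC)
  · exact .inl (hpos _ ha w hwC)

namespace IsSharpCone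

variable {E : Type*} [NormedAddCommGroup E] [NormedSpace ℝ E] [Nontrivial E] {C : Set E}

theorem zero_notMem (hC : IsSharpCone C) : (0 : E) ∉ C := by
  intro h0
  obtain ⟨r, hr, hball⟩ := Metric.isOpen_iff.mp hC.1 0 h0
  obtain ⟨x, hx⟩ := exists_norm_eq E (half_pos hr).le
  have hsmall (y : E) (hy : ‖y‖ = r / 2) : y ∈ closure C :=
    subset_closure (hball (by simp [hy, half_lt_self hr]))
  exact hC.2.2.2 x (norm_ne_zero_iff.1 (hx ▸ (half_pos hr).ne')) (hsmall x hx)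
    (hsmall (-x) (by rw [norm_neg, hx]))

theorem disjoint_neg (hC : IsSharpCone C) : Disjoint C (-C) := by
  refine Set.disjoint_left.2 fun x hx hnx => ?_
  exact hC.2.2.2 x (ne_of_mem_of_not_mem hx hC.zero_notMem) (subset_closure hx)
    (subset_closure hnx)

theorem mapsTo_or_mapsTo_neg [FiniteDimensional ℝ E] (hC : IsSharpCone C) (T : End ℝ E)
    (hinj : Function.Injective T)
    (hT : Projectivization.map T hinj '' projCone C ⊆ projCone C) :
    MapsTo T C C ∨ MapsTo T C (-C) := by
  have himage : T '' C ⊆ C ∪ -C := by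
    rintro _ ⟨x, hx, rfl⟩
    have hx0 : x ≠ 0 := ne_of_mem_of_not_mem hx hC.zero_notMem
    have hTx := hT ⟨_, ⟨x, hx0, hx, rfl⟩, rfl⟩
    rw [Projectivization.map_mk] at hTx
    exact mem_or_neg_mem_of_mk_mem_projCone hC.2.2.1 _ hTx
  simp only [mapsTo_iff_image_subset]
  have hconn : IsPreconnected (T '' C) :=
    hC.2.1.isPreconnected.image T T.continuous_of_finiteDimensional.continuousOn
  exact hconn.subset_or_subset hC.1 hC.1.neg hC.disjoint_neg himage

theorem exists_mem_apply_eq_or_apply_eq_neg [FiniteDimensional ℝ E] (hC : IsSharpCone C)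
    (hCne : C.Nonempty) (u : (End ℝ E)ˣ) (hinj : Function.Injective (u : End ℝ E))
    (hu : Projectivization.map (u : End ℝ E) hinj '' projCone C ⊆ projCone C) {M : ℝ}
    (hM : ∀ (n : ℤ) (x : E), ‖((u ^ n : (End ℝ E)ˣ) : End ℝ E) x‖ ≤ M * ‖x‖) :
    ∃ x ∈ C, (u : End ℝ E) x = x ∨ (u : End ℝ E) x = -x := by
  rcases hC.mapsTo_or_mapsTo_neg _ hinj hu with hmaps | hmaps
  · obtain ⟨x, hx, hux⟩ := exists_mem_apply_eq_self_of_mapsTo hC.1 hC.2.1 hCne hmaps hM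
    exact ⟨x, hx, .inl hux⟩
  · have hM' (n : ℤ) (x : E) : ‖(((-u) ^ n : (End ℝ E)ˣ) : End ℝ E) x‖ ≤ M * ‖x‖ := by
      rcases n.even_or_odd with hn | hn
      · rw [hn.neg_zpow]; exact hM n x
      · rw [hn.neg_zpow, Units.val_neg, LinearMap.neg_apply, norm_neg]; exact hM n x
    obtain ⟨x, hx, hux⟩ := exists_mem_apply_eq_self_of_mapsTo hC.1 hC.2.1 hCne
      (u := -u) (fun y hy => by simpa using hmaps hy) hM'
    exact ⟨x, hx, .inr (neg_eq_iff_eq_neg.mp (by simpa using hux))⟩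

end IsSharpCone

/-- If `γ ∈ SL(d+1,ℝ)` preserves a properly convex open subset `Ω ⊆ ℝP^d` and `γ` is
`S¹`-semi-simple (diagonalizable over `ℂ` with all eigenvalues of modulus `1`), then `γ`
fixes a point of `Ω`. -/
theorem s1_semisimple_fixes_point {d : ℕ}
    (γ : Matrix.SpecialLinearGroup (Fin (d + 1)) ℝ)
    (hinj : Function.Injective (Matrix.toLin' (γ : Matrix (Fin (d + 1)) (Fin (d + 1)) ℝ)))
    (Ω : Set (Projectivization ℝ (Fin (d + 1) → ℝ)))
    (hΩ : IsProperlyConvexOpen Ω)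
    (hpres : Projectivization.map
      (Matrix.toLin' (γ : Matrix (Fin (d + 1)) (Fin (d + 1)) ℝ)) hinj '' Ω = Ω)
    (hdiag : (⨆ μ : ℂ, Module.End.eigenspace
      (Matrix.toLin' ((γ : Matrix (Fin (d + 1)) (Fin (d + 1)) ℝ).map (algebraMap ℝ ℂ))) μ) = ⊤)
    (hmod : ∀ μ : ℂ, Module.End.HasEigenvalue
      (Matrix.toLin' ((γ : Matrix (Fin (d + 1)) (Fin (d + 1)) ℝ).map (algebraMap ℝ ℂ))) μ →
      ‖μ‖ = 1) :
    ∃ p ∈ Ω, Projectivization.map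
      (Matrix.toLin' (γ : Matrix (Fin (d + 1)) (Fin (d + 1)) ℝ)) hinj p = p := by
  obtain ⟨C, hC, hCne, rfl⟩ := hΩ
  set A := Matrix.SpecialLinearGroup.toGL γ
  obtain ⟨M, hM⟩ := A.exists_bound_norm_toLin_zpow_apply hdiag hmod
  obtain ⟨x, hxC, hx⟩ := hC.exists_mem_apply_eq_or_apply_eq_neg hCne
    (Matrix.GeneralLinearGroup.toLin A) hinj hpres.subset hM
  have hx0 : x ≠ 0 := ne_of_mem_of_not_mem hxC hC.zero_notMem
  refine ⟨Projectivization.mk ℝ x hx0, ⟨x, hx0, hxC, rfl⟩, ?_⟩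
  rw [Projectivization.map_mk, Projectivization.mk_eq_mk_iff']
  rcases hx with hx | hx
  · exact ⟨1, by rw [one_smul]; exact hx.symm⟩
  · exact ⟨-1, by rw [neg_one_smul]; exact hx.symm⟩
end

section
/- Let Ω be a properly convex open subset of the projective plane ℝP². If the metric space (Ω, d_Ω) with the Hilbert metric is Gromov-hyperbolic, then Ω is strictly convex (its boundary contains no nontrivial segment). -/
/-- `dfun` is the Hilbert distance on the properly convex (bounded open convex) set `Ω ⊆ ℝ^d`:
`dfun x x = 0` and for `x ≠ y` in `Ω`, `dfun x y = (1/2) log((|py|·|qx|)/(|px|·|qy|))` where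
`p, q` are the intersection points of the line `(xy)` with `∂Ω`, `x` lying between `p` and `y`
and `y` between `x` and `q`. -/
def IsHilbertDist {d : ℕ} (Ω : Set (EuclideanSpace ℝ (Fin d)))
    (dfun : EuclideanSpace ℝ (Fin d) → EuclideanSpace ℝ (Fin d) → ℝ) : Prop :=
  (∀ x ∈ Ω, dfun x x = 0) ∧
  ∀ x ∈ Ω, ∀ y ∈ Ω, x ≠ y →
    ∃ p q, p ∈ frontier Ω ∧ q ∈ frontier Ω ∧
      x ∈ openSegment ℝ p y ∧ y ∈ openSegment ℝ x q ∧
      dfun x y = (1 / 2) * Real.log ((dist p y * dist q x) / (dist p x * dist q y))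

/-!
Suppose `[p, q] ⊆ ∂Ω` with `p ≠ q`. Let `s` be its midpoint and `[A, B] ∋ s` the chord of `Ω̄` on
the line `pq`, so that no point of `Ω̄` lies beyond `A` or `B`. For `o ∈ Ω`, shrink the triangle
`A B o` towards `o` by the factor `1 - τ`: the image `u` of `s` lies on the image of `[A, B]`, and
every point `v` of the two other sides lies on `[A, o]` or on `[B, o]`. If `x` is the point of `∂Ω`
on the line `uv` beyond `u`, then `d(u, v) ≥ ½ log (1 + |u - v| / |x - u|)`, and likewise beyond
`v`. As `τ → 0`, one of these two boundary points comes arbitrarily close relative to `|u - v|`: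
the one beyond `u` when `v` stays away from `A` and `B` (since `u → s ∈ ∂Ω`), the one beyond `v`
when `v` tends to `A` or `B` (since the chord ends there). Compactness of the sides makes this
uniform in `v`, so for small `τ` the triangle is not `δ`-thin.
-/

open Filter Set Topology AffineMap

def RayExitsAt {V : Type*} [AddCommGroup V] [Module ℝ V] (K : Set V) (x y : V) : Prop :=
  ∀ ε : ℝ, 0 < ε → y + ε • (y - x) ∉ K

theorem IsOpen.dist_pos_of_mem_frontier {X : Type*} [MetricSpace X] {Ω : Set X} (ho : IsOpen Ω)
    {p x : X} (hp : p ∈ frontier Ω) (hx : x ∈ Ω) : 0 < dist p x :=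
  dist_pos.2 fun h => (ho.frontier_eq ▸ hp).2 (h ▸ hx)

section ConvexGeometry

variable {V : Type*} [NormedAddCommGroup V] [NormedSpace ℝ V]

theorem Convex.lineMap_mem_of_mem_closure {Ω : Set V} (hc : Convex ℝ Ω) (ho : IsOpen Ω)
    {x y : V} (hx : x ∈ closure Ω) (hy : y ∈ Ω) {t : ℝ} (ht : t ∈ Ioc 0 1) :
    lineMap x y t ∈ Ω := by
  have := hc.add_smul_sub_mem_interior' hx (ho.interior_eq.symm ▸ hy) ht
  rwa [ho.interior_eq, add_comm, ← lineMap_apply_module'] at this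

theorem Convex.rayExitsAt_closure_of_notMem {Ω : Set V} (hc : Convex ℝ Ω) (ho : IsOpen Ω)
    {s y : V} (hs : s ∉ Ω) (hy : y ∈ Ω) : RayExitsAt (closure Ω) y s := by
  intro ε hε h
  have ht : ε / (1 + ε) ∈ Ioc (0 : ℝ) 1 :=
    ⟨by positivity, (div_le_one (by positivity)).2 (by linarith)⟩
  apply hs
  convert hc.lineMap_mem_of_mem_closure ho h hy ht using 1
  rw [lineMap_apply_module']
  match_scalars <;> field_simp <;> ring

theorem Convex.dist_le_mul_dist_of_mem_openSegment {Ω : Set V} (hc : Convex ℝ Ω)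
    (ho : IsOpen Ω) {p x y : V} (hp : p ∈ closure Ω) (hx : x ∈ Ω) (hxs : x ∈ openSegment ℝ p y)
    {ε : ℝ} (hε : 0 ≤ ε) (hout : x + ε • (x - y) ∉ Ω) : dist p x ≤ ε * dist x y := by
  obtain ⟨α, β, hα, hβ, hαβ, rfl⟩ := hxs
  obtain rfl : α = 1 - β := by linarith
  have hpx : dist p ((1 - β) • p + β • y) = β * ‖p - y‖ := by
    rw [dist_eq_norm, show p - ((1 - β) • p + β • y) = β • (p - y) by module, norm_smul,
      Real.norm_of_nonneg hβ.le]
  have hxy : dist ((1 - β) • p + β • y) y = (1 - β) * ‖p - y‖ := by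
    rw [dist_eq_norm, show (1 - β) • p + β • y - y = (1 - β) • (p - y) by module, norm_smul,
      Real.norm_of_nonneg hα.le]
  rw [hpx, hxy, ← mul_assoc]
  by_contra! hlt
  have hlt' : ε * (1 - β) < β := lt_of_mul_lt_mul_right hlt (norm_nonneg _)
  have ht : 1 - ε * (1 - β) / β ∈ Ioc (0 : ℝ) 1 := by
    constructor
    · rw [sub_pos, div_lt_one hβ]; exact hlt'
    · have : 0 ≤ ε * (1 - β) / β := by positivity
      linarith
  apply hout
  convert hc.lineMap_mem_of_mem_closure ho hp hx ht using 1
  rw [lineMap_apply_module']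
  match_scalars <;> field_simp <;> ring

theorem isCompact_lineMap_preimage {K : Set V} (hK : IsCompact K) {p q : V} (hpq : p ≠ q) :
    IsCompact (lineMap p q ⁻¹' K : Set ℝ) := by
  have h : IsClosedEmbedding (lineMap p q : ℝ → V) := by
    convert (Homeomorph.addRight p).isClosedEmbedding.comp
      (isClosedEmbedding_smul_left (𝕜 := ℝ) (sub_ne_zero.2 hpq.symm)) using 1
    funext t
    simp [lineMap_apply_module']
  exact h.isCompact_preimage hK

theorem IsCompact.exists_segment_rayExitsAt {K : Set V} (hK : IsCompact K) {p q s : V}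
    (hpq : p ≠ q) (hp : p ∈ K) (hq : q ∈ K) (hs : s ∈ openSegment ℝ p q) :
    ∃ A ∈ K, ∃ B ∈ K, s ∈ segment ℝ A B ∧ RayExitsAt K s A ∧ RayExitsAt K s B := by
  rw [openSegment_eq_image_lineMap] at hs
  obtain ⟨t, ht, rfl⟩ := hs
  have hT := isCompact_lineMap_preimage hK hpq
  obtain ⟨a, ha, hmin⟩ := hT.exists_isLeast ⟨0, by simpa using hp⟩
  obtain ⟨b, hb, hmax⟩ := hT.exists_isGreatest ⟨0, by simpa using hp⟩
  have hat : a < t := (hmin (show (0 : ℝ) ∈ _ by simpa using hp)).trans_lt ht.1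
  have htb : t < b := ht.2.trans_le (hmax (show (1 : ℝ) ∈ _ by simpa using hq))
  have hshift : ∀ c ε : ℝ, lineMap p q c + ε • (lineMap p q c - lineMap p q t) =
      (lineMap p q (c + ε * (c - t)) : V) := by
    intro c ε
    simp only [lineMap_apply_module']
    module
  refine ⟨_, ha, _, hb, ?_, fun ε hε h => ?_, fun ε hε h => ?_⟩
  · rw [← image_segment, segment_eq_Icc (hat.trans htb).le]
    exact mem_image_of_mem _ ⟨hat.le, htb.le⟩
  · rw [hshift] at h
    nlinarith [hmin h]
  · rw [hshift] at h
    nlinarith [hmax h]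

theorem lineMap_mem_segment_lineMap {s A B : V} (hs : s ∈ segment ℝ A B) (o : V) (τ : ℝ) :
    lineMap s o τ ∈ segment ℝ (lineMap A o τ) (lineMap B o τ) := by
  have h := mem_image_of_mem (homothety o (1 - τ)) hs
  rw [image_segment] at h
  simpa only [homothety_eq_lineMap, lineMap_apply_one_sub] using h

theorem exists_lineMap_eq_of_mem_segment {E o v : V} {τ : ℝ} (hτ : τ ≤ 1)
    (hv : v ∈ segment ℝ (lineMap E o τ) o) : ∃ μ ∈ Icc τ 1, lineMap E o μ = v := by
  have h : segment ℝ (lineMap E o τ) o = lineMap E o '' Icc τ 1 := by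
    rw [← segment_eq_Icc hτ, image_segment, lineMap_apply_one]
  rwa [h] at hv

end ConvexGeometry

section HilbertDistance

variable {d : ℕ} {Ω : Set (EuclideanSpace ℝ (Fin d))}
  {dfun : EuclideanSpace ℝ (Fin d) → EuclideanSpace ℝ (Fin d) → ℝ}

theorem IsHilbertDist.exists_eq_half_log (hd : IsHilbertDist Ω dfun) (ho : IsOpen Ω)
    {u w : EuclideanSpace ℝ (Fin d)} (hu : u ∈ Ω) (hw : w ∈ Ω) (huw : u ≠ w) :
    ∃ p ∈ frontier Ω, ∃ q ∈ frontier Ω, u ∈ openSegment ℝ p w ∧ w ∈ openSegment ℝ q u ∧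
      dfun u w = 1 / 2 * Real.log ((1 + dist u w / dist p u) * (1 + dist u w / dist q w)) := by
  obtain ⟨p, q, hp, hq, hup, hwq, hdist⟩ := hd.2 u hu w hw huw
  have hpu := ho.dist_pos_of_mem_frontier hp hu
  have hqw := ho.dist_pos_of_mem_frontier hq hw
  have hpw := dist_add_dist_of_mem_segment (openSegment_subset_segment ℝ _ _ hup)
  have hqu := dist_add_dist_of_mem_segment (openSegment_subset_segment ℝ _ _ hwq)
  refine ⟨p, hp, q, hq, hup, openSegment_symm ℝ u q ▸ hwq, ?_⟩
  rw [hdist, ← hpw, dist_comm q u, ← hqu, dist_comm w q]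
  congr 2
  field_simp
  ring

theorem IsHilbertDist.half_log_one_add_inv_le (hd : IsHilbertDist Ω dfun) (hc : Convex ℝ Ω)
    (ho : IsOpen Ω) {u w : EuclideanSpace ℝ (Fin d)} (hu : u ∈ Ω) (hw : w ∈ Ω) (huw : u ≠ w)
    {ε : ℝ} (hε : 0 < ε) (hout : u + ε • (u - w) ∉ Ω ∨ w + ε • (w - u) ∉ Ω) :
    1 / 2 * Real.log (1 + ε⁻¹) ≤ dfun u w := by
  obtain ⟨p, hp, q, hq, hup, hwq, hdist⟩ := hd.exists_eq_half_log ho hu hw huw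
  have hpu := ho.dist_pos_of_mem_frontier hp hu
  have hqw := ho.dist_pos_of_mem_frontier hq hw
  have hinv : ∀ {r : ℝ}, 0 < r → r ≤ ε * dist u w → ε⁻¹ ≤ dist u w / r := fun hr hle => by
    rw [le_div_iff₀ hr, ← div_eq_inv_mul, div_le_iff₀ hε]; linarith
  rw [hdist]
  gcongr
  rcases hout with hout | hout
  · calc 1 + ε⁻¹ ≤ 1 + dist u w / dist p u := by
          gcongr
          exact hinv hpu (hc.dist_le_mul_dist_of_mem_openSegment ho (frontier_subset_closure hp)
            hu hup hε.le hout)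
      _ ≤ _ := le_mul_of_one_le_right (by positivity) (le_add_of_nonneg_right (by positivity))
  · calc 1 + ε⁻¹ ≤ 1 + dist u w / dist q w := by
          gcongr
          exact hinv hqw (dist_comm w u ▸ hc.dist_le_mul_dist_of_mem_openSegment ho
            (frontier_subset_closure hq) hw hwq hε.le hout)
      _ ≤ _ := le_mul_of_one_le_left (by positivity) (le_add_of_nonneg_right (by positivity))

theorem IsHilbertDist.tendsto_atTop (hd : IsHilbertDist Ω dfun) (hc : Convex ℝ Ω)
    (ho : IsOpen Ω) {ι : Type*} {l : Filter ι} {u w : ι → EuclideanSpace ℝ (Fin d)}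
    {a b : EuclideanSpace ℝ (Fin d)} (hu : ∀ᶠ i in l, u i ∈ Ω) (hw : ∀ᶠ i in l, w i ∈ Ω)
    (hua : Tendsto u l (𝓝 a)) (hwb : Tendsto w l (𝓝 b)) (hab : a ≠ b)
    (hexit : RayExitsAt (closure Ω) b a ∨ RayExitsAt (closure Ω) a b) :
    Tendsto (fun i => dfun (u i) (w i)) l atTop := by
  rw [Filter.tendsto_atTop]
  intro M
  have hlog : Tendsto (fun ε : ℝ => 1 / 2 * Real.log (1 + ε⁻¹)) (𝓝[>] 0) atTop :=
    (Real.tendsto_log_atTop.comp (tendsto_atTop_add_const_left _ 1 tendsto_inv_nhdsGT_zero))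
      |>.const_mul_atTop (by norm_num)
  obtain ⟨ε, hM, hε⟩ := ((hlog.eventually_ge_atTop M).and self_mem_nhdsWithin).exists
  have hleave : ∀ {x y : ι → EuclideanSpace ℝ (Fin d)} {c e}, Tendsto x l (𝓝 c) →
      Tendsto y l (𝓝 e) → RayExitsAt (closure Ω) e c →
      ∀ᶠ i in l, x i + ε • (x i - y i) ∉ Ω :=
    fun hx hy h => ((hx.add ((hx.sub hy).const_smul ε)).eventually
      (isClosed_closure.isOpen_compl.mem_nhds (h ε hε))).mono fun _ hi hΩ => hi (subset_closure hΩ)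
  have hout : ∀ᶠ i in l, u i + ε • (u i - w i) ∉ Ω ∨ w i + ε • (w i - u i) ∉ Ω := by
    rcases hexit with h | h
    · exact (hleave hua hwb h).mono fun _ => Or.inl
    · exact (hleave hwb hua h).mono fun _ => Or.inr
  have hne : ∀ᶠ i in l, u i ≠ w i :=
    ((hua.dist hwb).eventually_ne (dist_ne_zero.2 hab)).mono fun _ h => dist_ne_zero.1 h
  filter_upwards [hu, hw, hne, hout] with i hui hwi hne hout
  exact hM.trans (hd.half_log_one_add_inv_le hc ho hui hwi hne hε hout)

theorem IsHilbertDist.eventually_lt_of_rayExitsAt (hd : IsHilbertDist Ω dfun) (hc : Convex ℝ Ω)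
    (ho : IsOpen Ω) {s E o : EuclideanSpace ℝ (Fin d)} (hs : s ∈ frontier Ω)
    (hE : E ∈ closure Ω) (hEexit : RayExitsAt (closure Ω) s E) (hoΩ : o ∈ Ω) (M : ℝ) :
    ∀ᶠ τ in 𝓝[>] (0 : ℝ), ∀ μ ∈ Ioc (0 : ℝ) 1, M < dfun (lineMap s o τ) (lineMap E o μ) := by
  have hsΩ : s ∉ Ω := (ho.frontier_eq ▸ hs).2
  have hlocal : ∀ μ₀ ∈ Icc (0 : ℝ) 1, ∀ᶠ z : ℝ × ℝ in 𝓝 (0, μ₀),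
      z ∈ Ioc (0 : ℝ) 1 ×ˢ Ioc (0 : ℝ) 1 → M < dfun (lineMap s o z.1) (lineMap E o z.2) := by
    intro μ₀ hμ₀
    obtain ⟨hne, hexit⟩ : s ≠ lineMap E o μ₀ ∧ (RayExitsAt (closure Ω) (lineMap E o μ₀) s ∨
        RayExitsAt (closure Ω) s (lineMap E o μ₀)) := by
      rcases hμ₀.1.eq_or_lt with rfl | hpos
      · rw [lineMap_apply_zero]
        exact ⟨fun h => hEexit 1 one_pos (by simpa [h] using hE), Or.inr hEexit⟩
      · have hw := hc.lineMap_mem_of_mem_closure ho hE hoΩ ⟨hpos, hμ₀.2⟩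
        exact ⟨fun h => hsΩ (h ▸ hw), Or.inl (hc.rayExitsAt_closure_of_notMem ho hsΩ hw)⟩
    rw [← eventually_inf_principal]
    refine (hd.tendsto_atTop hc ho ?_ ?_ ?_ ?_ hne hexit).eventually_gt_atTop M
    · exact eventually_inf_principal.2 <| Eventually.of_forall fun z hz =>
        hc.lineMap_mem_of_mem_closure ho (frontier_subset_closure hs) hoΩ hz.1
    · exact eventually_inf_principal.2 <| Eventually.of_forall fun z hz =>
        hc.lineMap_mem_of_mem_closure ho hE hoΩ hz.2
    · have h := ((lineMap_continuous (p := s) (q := o)).comp continuous_fst).tendsto ((0 : ℝ), μ₀)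
      simpa [Function.comp_def] using h.mono_left inf_le_left
    · exact (((lineMap_continuous (p := E) (q := o)).comp continuous_snd).tendsto
        ((0 : ℝ), μ₀)).mono_left inf_le_left
  filter_upwards [nhdsWithin_le_nhds (isCompact_Icc.eventually_forall_of_forall_eventually
      (x₀ := (0 : ℝ)) (P := fun τ μ => (τ, μ) ∈ Ioc (0 : ℝ) 1 ×ˢ Ioc (0 : ℝ) 1 →
        M < dfun (lineMap s o τ) (lineMap E o μ)) hlocal),
    Ioc_mem_nhdsGT one_pos] with τ hτ hτ' μ hμ
  exact hτ μ (Ioc_subset_Icc_self hμ) ⟨hτ', hμ⟩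

end HilbertDistance

/-- If the Hilbert metric of a properly convex open set `Ω ⊆ ℝP²` (realized as a bounded open
convex subset of the plane) is Gromov-hyperbolic — every geodesic triangle, in particular
every triangle of straight segments, is `δ`-thin — then `Ω` is strictly convex: its boundary
contains no nontrivial segment. -/
theorem gromov_hyperbolic_implies_strictly_convex (Ω : Set (EuclideanSpace ℝ (Fin 2)))
    (ho : IsOpen Ω) (hc : Convex ℝ Ω) (hb : Bornology.IsBounded Ω) (hne : Ω.Nonempty)
    (dfun : EuclideanSpace ℝ (Fin 2) → EuclideanSpace ℝ (Fin 2) → ℝ)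
    (hd : IsHilbertDist Ω dfun)
    (hhyp : ∃ δ : ℝ, 0 ≤ δ ∧ ∀ x ∈ Ω, ∀ y ∈ Ω, ∀ z ∈ Ω, ∀ u ∈ segment ℝ x y,
      ∃ v ∈ segment ℝ y z ∪ segment ℝ z x, dfun u v ≤ δ) :
    ∀ p ∈ frontier Ω, ∀ q ∈ frontier Ω, segment ℝ p q ⊆ frontier Ω → p = q := by
  intro p hp q hq hseg
  by_contra hpq
  obtain ⟨δ, -, hthin⟩ := hhyp
  obtain ⟨o, hoΩ⟩ := hne
  have hs := midpoint_mem_openSegment (𝕜 := ℝ) p q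
  obtain ⟨A, hA, B, hB, hsAB, hAexit, hBexit⟩ := hb.isCompact_closure.exists_segment_rayExitsAt hpq
    (frontier_subset_closure hp) (frontier_subset_closure hq) hs
  have hsfr := hseg (openSegment_subset_segment ℝ p q hs)
  have hfarA := hd.eventually_lt_of_rayExitsAt hc ho hsfr hA hAexit hoΩ δ
  have hfarB := hd.eventually_lt_of_rayExitsAt hc ho hsfr hB hBexit hoΩ δ
  obtain ⟨τ, hτA, hτB, hτ⟩ := (hfarA.and (hfarB.and (Ioo_mem_nhdsGT one_pos))).exists
  obtain ⟨v, hv, hle⟩ := hthin _ (hc.lineMap_mem_of_mem_closure ho hA hoΩ ⟨hτ.1, hτ.2.le⟩)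
    _ (hc.lineMap_mem_of_mem_closure ho hB hoΩ ⟨hτ.1, hτ.2.le⟩) o hoΩ _
    (lineMap_mem_segment_lineMap hsAB o τ)
  rw [segment_symm ℝ o] at hv
  rcases hv with hv | hv
  · obtain ⟨μ, hμ, rfl⟩ := exists_lineMap_eq_of_mem_segment hτ.2.le hv
    exact (hτB μ ⟨hτ.1.trans_le hμ.1, hμ.2⟩).not_ge hle
  · obtain ⟨μ, hμ, rfl⟩ := exists_lineMap_eq_of_mem_segment hτ.2.le hv
    exact (hτA μ ⟨hτ.1.trans_le hμ.1, hμ.2⟩).not_ge hle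
end
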